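/- Let G = S₃ × D_n (n ≥ 3), S = {a,b,c} with a = ((1 2),1), b = ((1 3),z), c = ((2 3),zr), and X_n = Cay(G,S). Then the function f on G defined by f(h₁,h₂) = ∅ if h₁ ∈ A₃, {1} if h₁ = (1 2), {2} if h₁ = (2 3), {3} if h₁ = (1 3), is a 3-rainbow dominating function on X_n of weight 6n = |G|/2; hence X_n is a 3-RDR graph. -/

import Mathlib

/-!
A vertex `(p, d)` with `p` even is adjacent to `(p (1 2), _)`, `(p (1 3), _)` and `(p (2 3), _)`,
whose first coordinates are the three transpositions, so it sees all three colors; the odd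
half of the `12 n` vertices carries one color each, for weight `6 n`.

Conversely, if `f` is a `k`-rainbow dominating function on a graph of maximum degree `Δ`, every
vertex with `f v = ∅` needs `k` colors spread over at most `Δ` neighbours, and each colored
vertex is counted by at most `Δ` such vertices; hence `k · #{f v = ∅} ≤ Δ · w(f)`, while
`#{f v ≠ ∅} ≤ w(f)`, giving `k |V| ≤ (Δ + k) w(f)`. For a cubic graph and `k = 3` this is
`|V| ≤ 2 w(f)`.
-/

open SimpleGraph Finset

/-- A `k`-rainbow dominating function on a graph `G`: whenever `f v = ∅`,
every color appears on some neighbor of `v`. -/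
def IsKRDF {V : Type*} (G : SimpleGraph V) (k : ℕ) (f : V → Finset (Fin k)) : Prop :=
  ∀ v, f v = ∅ → ∀ c : Fin k, ∃ u, G.Adj v u ∧ c ∈ f u

/-- The weight of a rainbow dominating function. -/
def rdfWeight {V : Type*} [Fintype V] {k : ℕ} (f : V → Finset (Fin k)) : ℕ :=
  ∑ v, (f v).card

/-- The `k`-rainbow domination number of `G`. -/
noncomputable def rainbowDomNum {V : Type*} [Fintype V] (G : SimpleGraph V) (k : ℕ) : ℕ :=
  sInf {w | ∃ f, IsKRDF G k f ∧ rdfWeight f = w}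

/-- The generator `a = ((1 2), 1)` of `S₃ × Dₙ`. -/
def genA (n : ℕ) : Equiv.Perm (Fin 3) × DihedralGroup n := (Equiv.swap 0 1, 1)

/-- The generator `b = ((1 3), z)` of `S₃ × Dₙ`. -/
def genB (n : ℕ) : Equiv.Perm (Fin 3) × DihedralGroup n :=
  (Equiv.swap 0 2, DihedralGroup.sr 0)

/-- The generator `c = ((2 3), z r)` of `S₃ × Dₙ`. -/
def genC (n : ℕ) : Equiv.Perm (Fin 3) × DihedralGroup n :=
  (Equiv.swap 1 2, DihedralGroup.sr 1)

/-- The Cayley graph `Xₙ = Cay(S₃ × Dₙ, {a, b, c})`. -/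
def XCay (n : ℕ) : SimpleGraph (Equiv.Perm (Fin 3) × DihedralGroup n) where
  Adj g h := g ≠ h ∧
    ((∃ s ∈ ({genA n, genB n, genC n} : Set _), h = g * s) ∨
     (∃ s ∈ ({genA n, genB n, genC n} : Set _), g = h * s))
  symm := ⟨by rintro g h ⟨hne, hs⟩; exact ⟨hne.symm, hs.symm⟩⟩
  loopless := ⟨fun g h => h.1 rfl⟩

/-- The coloring of `S₃ × Dₙ`: `∅` on even first coordinates, and colors
`1, 2, 3` (realized as `0, 1, 2 : Fin 3`) on the transpositions
`(1 2), (2 3), (1 3)` respectively. -/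
def cayColor (n : ℕ) (g : Equiv.Perm (Fin 3) × DihedralGroup n) : Finset (Fin 3) :=
  if Equiv.Perm.sign g.1 = 1 then ∅
  else if g.1 = Equiv.swap 0 1 then {0}
  else if g.1 = Equiv.swap 1 2 then {1}
  else {2}

section RainbowDomination

variable {V : Type*} [Fintype V] {G : SimpleGraph V} {k : ℕ} {f : V → Finset (Fin k)}

theorem rainbowDomNum_eq_of_forall_le (hf : IsKRDF G k f)
    (hmin : ∀ g, IsKRDF G k g → rdfWeight f ≤ rdfWeight g) :
    rainbowDomNum G k = rdfWeight f :=
  le_antisymm (Nat.sInf_le ⟨f, hf, rfl⟩)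
    (le_csInf ⟨_, f, hf, rfl⟩ (by rintro _ ⟨g, hg, rfl⟩; exact hmin g hg))

theorem card_filter_ne_empty_le_rdfWeight :
    #{v | f v ≠ ∅} ≤ rdfWeight f := by
  rw [card_filter, rdfWeight]
  refine sum_le_sum fun v _ => ?_
  split_ifs with hv
  · exact card_pos.mpr (nonempty_iff_ne_empty.mpr hv)
  · exact Nat.zero_le _

theorem sum_sum_neighborFinset_eq [DecidableRel G.Adj] (g : V → ℕ) :
    ∑ v, ∑ u ∈ G.neighborFinset v, g u = ∑ u, G.degree u * g u := by
  rw [sum_comm' (t' := univ) (s' := fun u => G.neighborFinset u) (by simp [adj_comm])]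
  simp only [sum_const, card_neighborFinset_eq_degree, smul_eq_mul]

theorem IsKRDF.mul_card_filter_eq_empty_le [DecidableRel G.Adj] (hf : IsKRDF G k f) :
    k * #{v | f v = ∅} ≤ G.maxDegree * rdfWeight f := by
  have hrainbow : ∀ v, f v = ∅ → k ≤ ∑ u ∈ G.neighborFinset v, #(f u) := fun v hv =>
    calc k = #(univ : Finset (Fin k)) := by simp
      _ ≤ #((G.neighborFinset v).biUnion f) := card_le_card fun c _ => by
          obtain ⟨u, hu, hc⟩ := hf v hv c
          exact mem_biUnion.mpr ⟨u, (mem_neighborFinset G v u).mpr hu, hc⟩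
      _ ≤ _ := card_biUnion_le
  calc k * #{v | f v = ∅} = ∑ v ∈ {v | f v = ∅}, k := by rw [sum_const, smul_eq_mul, mul_comm]
    _ ≤ ∑ v ∈ {v | f v = ∅}, ∑ u ∈ G.neighborFinset v, #(f u) :=
        sum_le_sum fun v hv => hrainbow v (mem_filter.mp hv).2
    _ ≤ ∑ v, ∑ u ∈ G.neighborFinset v, #(f u) :=
        sum_le_sum_of_subset_of_nonneg (subset_univ _) fun _ _ _ => Nat.zero_le _
    _ = ∑ u, G.degree u * #(f u) := sum_sum_neighborFinset_eq _
    _ ≤ ∑ u, G.maxDegree * #(f u) :=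
        sum_le_sum fun u _ => Nat.mul_le_mul_right _ (G.degree_le_maxDegree u)
    _ = G.maxDegree * rdfWeight f := by rw [← mul_sum, rdfWeight]

theorem IsKRDF.mul_card_le_rdfWeight [DecidableRel G.Adj] (hf : IsKRDF G k f) :
    k * Fintype.card V ≤ (G.maxDegree + k) * rdfWeight f := by
  have hsplit : #{v | f v = ∅} + #{v | f v ≠ ∅} = Fintype.card V :=
    card_filter_add_card_filter_not _
  have hempty := hf.mul_card_filter_eq_empty_le
  have hcolored := Nat.mul_le_mul_left k (card_filter_ne_empty_le_rdfWeight (f := f))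
  rw [← hsplit]
  linarith

end RainbowDomination

section CayleyGraph

open Equiv

variable {n : ℕ}

theorem gen_mul_self {s : Perm (Fin 3) × DihedralGroup n}
    (hs : s ∈ ({genA n, genB n, genC n} : Set _)) : s * s = 1 := by
  rcases hs with rfl | rfl | rfl <;> simp [genA, genB, genC, Prod.ext_iff]

theorem gen_ne_one {s : Perm (Fin 3) × DihedralGroup n}
    (hs : s ∈ ({genA n, genB n, genC n} : Set _)) : s ≠ 1 := by
  rcases hs with rfl | rfl | rfl <;> simp [genA, genB, genC, Prod.ext_iff, swap_eq_one_iff]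

theorem XCay_adj_mul_gen (g : Perm (Fin 3) × DihedralGroup n)
    {s : Perm (Fin 3) × DihedralGroup n} (hs : s ∈ ({genA n, genB n, genC n} : Set _)) :
    (XCay n).Adj g (g * s) :=
  ⟨fun h => gen_ne_one hs (left_eq_mul.mp h), Or.inl ⟨s, hs, rfl⟩⟩

theorem exists_gen_of_XCay_adj {g h : Perm (Fin 3) × DihedralGroup n} (hadj : (XCay n).Adj g h) :
    ∃ s ∈ ({genA n, genB n, genC n} : Set _), h = g * s := by
  obtain ⟨-, hs | ⟨s, hs, rfl⟩⟩ := hadj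
  · exact hs
  · exact ⟨s, hs, by rw [mul_assoc, gen_mul_self hs, mul_one]⟩

theorem XCay_maxDegree_le [NeZero n] [DecidableRel (XCay n).Adj] : (XCay n).maxDegree ≤ 3 := by
  refine maxDegree_le_of_forall_degree_le _ _ fun g => ?_
  rw [← card_neighborFinset_eq_degree]
  refine (card_le_card (t := {g * genA n, g * genB n, g * genC n}) fun h hh => ?_).trans
    card_le_three
  obtain ⟨s, hs, rfl⟩ := exists_gen_of_XCay_adj ((mem_neighborFinset _ _ _).mp hh)
  rcases hs with rfl | rfl | rfl <;> simp

theorem card_perm_prod_dihedralGroup [NeZero n] :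
    Fintype.card (Perm (Fin 3) × DihedralGroup n) = 12 * n := by
  rw [Fintype.card_prod, Fintype.card_perm, Fintype.card_fin, DihedralGroup.card]
  norm_num [Nat.factorial]
  ring

end CayleyGraph

section Coloring

open Equiv

/-- `cayColor n g` unfolds to `permColor g.1`, whose properties are decidable over `S₃`. -/
def permColor (p : Perm (Fin 3)) : Finset (Fin 3) :=
  if Perm.sign p = 1 then ∅
  else if p = swap 0 1 then {0}
  else if p = swap 1 2 then {1}
  else {2}

theorem sign_eq_one_of_permColor_eq_empty :
    ∀ p : Perm (Fin 3), permColor p = ∅ → Perm.sign p = 1 := by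
  decide

theorem mem_permColor_mul_swap_of_sign_eq_one :
    ∀ p : Perm (Fin 3), Perm.sign p = 1 → ∀ c : Fin 3,
      c ∈ permColor (p * swap 0 1) ∨ c ∈ permColor (p * swap 0 2) ∨
        c ∈ permColor (p * swap 1 2) := by
  decide

theorem sum_card_permColor : ∑ p : Perm (Fin 3), #(permColor p) = 3 := by
  decide

theorem isKRDF_cayColor (n : ℕ) : IsKRDF (XCay n) 3 (cayColor n) := by
  intro g hg c
  rcases mem_permColor_mul_swap_of_sign_eq_one g.1
    (sign_eq_one_of_permColor_eq_empty g.1 hg) c with h | h | h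
  · exact ⟨g * genA n, XCay_adj_mul_gen g (by simp), h⟩
  · exact ⟨g * genB n, XCay_adj_mul_gen g (by simp), h⟩
  · exact ⟨g * genC n, XCay_adj_mul_gen g (by simp), h⟩

theorem rdfWeight_cayColor (n : ℕ) [NeZero n] : rdfWeight (cayColor n) = 6 * n := by
  change ∑ g : Perm (Fin 3) × DihedralGroup n, #(permColor g.1) = 6 * n
  rw [Fintype.sum_prod_type_right]
  simp only [sum_card_permColor, sum_const, card_univ, DihedralGroup.card, smul_eq_mul]
  ring

end Coloring

theorem XCay_is3RDR_general (n : ℕ) [NeZero n] :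
    IsKRDF (XCay n) 3 (cayColor n) ∧
    rdfWeight (cayColor n) = 6 * n ∧
    2 * rainbowDomNum (XCay n) 3 =
      Fintype.card (Equiv.Perm (Fin 3) × DihedralGroup n) := by
  classical
  have hf := isKRDF_cayColor n
  have hw := rdfWeight_cayColor n
  refine ⟨hf, hw, ?_⟩
  rw [rainbowDomNum_eq_of_forall_le hf fun g hg => ?_, hw, card_perm_prod_dihedralGroup]
  · ring
  have hbound := hg.mul_card_le_rdfWeight
  rw [card_perm_prod_dihedralGroup] at hbound
  have hdeg := Nat.mul_le_mul_right (rdfWeight g)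
    (Nat.add_le_add_right (XCay_maxDegree_le (n := n)) 3)
  rw [hw]
  linarith

/-- For `n ≥ 3`, the function `cayColor` is a `3`-rainbow dominating function on
`Xₙ = Cay(S₃ × Dₙ, {a,b,c})` of weight `6 n = |G| / 2`; hence `Xₙ` is a `3`-RDR
graph. -/
theorem XCay_is3RDR (n : ℕ) [NeZero n] (hn : 3 ≤ n) :
    IsKRDF (XCay n) 3 (cayColor n) ∧
    rdfWeight (cayColor n) = 6 * n ∧
    2 * rainbowDomNum (XCay n) 3 =
      Fintype.card (Equiv.Perm (Fin 3) × DihedralGroup n) :=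
  XCay_is3RDR_general n
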